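/- Let n ≥ 1 and let S be a sequence over Z/2Z of length n-1. Then the Steinhaus graph G(S) is even (every vertex has even degree) if and only if the Steinhaus triangle θ(G(S)) = ∇(∫_{n,0} ir(S)) of size 2n-1 is dihedrally symmetric. -/

import Mathlib

open Finset

namespace Steinhaus

/-- Extended binomial coefficient `C(a,b)` for integers `a`, `b`:
`C(a,0) = 1`, `C(0,b) = 0` for `b > 0`, Pascal's rule everywhere; in particular
`C(a,b) = 0` for `b < 0` and `C(a,b) = (-1)^b C(b-a-1,b)` for `a < 0 ≤ b`. -/
def ibinom (a b : ℤ) : ℤ :=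
  if b < 0 then 0
  else if 0 ≤ a then (a.toNat.choose b.toNat : ℤ)
  else (-1) ^ b.toNat * ((b - a - 1).toNat.choose b.toNat : ℤ)

/-- `(i,j)` is an index of the triangle of size `n`, i.e. `1 ≤ i ≤ j ≤ n`. -/
def InTri (n i j : ℕ) : Prop := 1 ≤ i ∧ i ≤ j ∧ j ≤ n

instance (n i j : ℕ) : Decidable (InTri n i j) :=
  inferInstanceAs (Decidable (1 ≤ i ∧ i ≤ j ∧ j ≤ n))

/-- The `ZMod 2`-vector space of binary Steinhaus triangles of size `n`,
realized as functions `ℕ → ℕ → ZMod 2` vanishing outside the triangle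
`{(i,j) | 1 ≤ i ≤ j ≤ n}` and satisfying the local rule
`a i j = a (i-1) (j-1) + a (i-1) j` inside it. -/
def ST (n : ℕ) : Submodule (ZMod 2) (ℕ → ℕ → ZMod 2) where
  carrier := {a | (∀ i j, ¬ InTri n i j → a i j = 0) ∧
    ∀ i j, 2 ≤ i → i ≤ j → j ≤ n → a i j = a (i - 1) (j - 1) + a (i - 1) j}
  add_mem' := by
    rintro a b ⟨ha0, ha1⟩ ⟨hb0, hb1⟩
    refine ⟨fun i j h => ?_, fun i j h2 hij hjn => ?_⟩
    · simp only [Pi.add_apply, ha0 i j h, hb0 i j h, add_zero]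
    · simp only [Pi.add_apply, ha1 i j h2 hij hjn, hb1 i j h2 hij hjn]
      ring
  zero_mem' := ⟨fun _ _ _ => rfl, fun _ _ _ _ _ => by simp⟩
  smul_mem' := by
    rintro c a ⟨ha0, ha1⟩
    refine ⟨fun i j h => ?_, fun i j h2 hij hjn => ?_⟩
    · simp only [Pi.smul_apply, ha0 i j h, smul_zero]
    · simp only [Pi.smul_apply, ha1 i j h2 hij hjn, smul_add]

/-- The first row of the triangle `a` (of size `n`) is the sequence `S`;
equivalently, `a = ∇S`. -/
def FirstRow (n : ℕ) (a : ℕ → ℕ → ZMod 2) (S : ℕ → ZMod 2) : Prop :=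
  ∀ j, 1 ≤ j → j ≤ n → a 1 j = S j

/-- The rotation `r` by 120 degrees: `r(a)_{i,j} = a_{j-i+1, n-i+1}`. -/
def rot (n : ℕ) (a : ℕ → ℕ → ZMod 2) : ℕ → ℕ → ZMod 2 :=
  fun i j => if InTri n i j then a (j - i + 1) (n - i + 1) else 0

/-- The horizontal reflection `h`: `h(a)_{i,j} = a_{i, n-j+i}`. -/
def hrefl (n : ℕ) (a : ℕ → ℕ → ZMod 2) : ℕ → ℕ → ZMod 2 :=
  fun i j => if InTri n i j then a i (n - j + i) else 0

lemma rot_add (n : ℕ) (a b : ℕ → ℕ → ZMod 2) :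
    rot n (a + b) = rot n a + rot n b := by
  funext i j
  simp only [rot, Pi.add_apply]
  split_ifs <;> simp

lemma rot_smul (n : ℕ) (c : ZMod 2) (a : ℕ → ℕ → ZMod 2) :
    rot n (c • a) = c • rot n a := by
  funext i j
  simp only [rot, Pi.smul_apply]
  split_ifs <;> simp

lemma hrefl_add (n : ℕ) (a b : ℕ → ℕ → ZMod 2) :
    hrefl n (a + b) = hrefl n a + hrefl n b := by
  funext i j
  simp only [hrefl, Pi.add_apply]
  split_ifs <;> simp

lemma hrefl_smul (n : ℕ) (c : ZMod 2) (a : ℕ → ℕ → ZMod 2) :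
    hrefl n (c • a) = c • hrefl n a := by
  funext i j
  simp only [hrefl, Pi.smul_apply]
  split_ifs <;> simp

/-- The linear map `ρ = r² + r + id`. -/
def rho (n : ℕ) (a : ℕ → ℕ → ZMod 2) : ℕ → ℕ → ZMod 2 :=
  rot n (rot n a) + rot n a + a

/-- The subspace of rotationally symmetric Steinhaus triangles (fixed by `r`). -/
def RST (n : ℕ) : Submodule (ZMod 2) (ℕ → ℕ → ZMod 2) where
  carrier := {a | a ∈ ST n ∧ rot n a = a}
  add_mem' := by
    rintro a b ⟨ha, ha'⟩ ⟨hb, hb'⟩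
    exact ⟨add_mem ha hb, by rw [rot_add, ha', hb']⟩
  zero_mem' := ⟨zero_mem _, by funext i j; simp [rot]⟩
  smul_mem' := by
    rintro c a ⟨ha, ha'⟩
    exact ⟨Submodule.smul_mem _ c ha, by rw [rot_smul, ha']⟩

/-- The subspace of horizontally symmetric Steinhaus triangles (fixed by `h`). -/
def HST (n : ℕ) : Submodule (ZMod 2) (ℕ → ℕ → ZMod 2) where
  carrier := {a | a ∈ ST n ∧ hrefl n a = a}
  add_mem' := by
    rintro a b ⟨ha, ha'⟩ ⟨hb, hb'⟩
    exact ⟨add_mem ha hb, by rw [hrefl_add, ha', hb']⟩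
  zero_mem' := ⟨zero_mem _, by funext i j; simp [hrefl]⟩
  smul_mem' := by
    rintro c a ⟨ha, ha'⟩
    exact ⟨Submodule.smul_mem _ c ha, by rw [hrefl_smul, ha']⟩

/-- The subspace of dihedrally symmetric Steinhaus triangles (fixed by `r` and `h`). -/
def DST (n : ℕ) : Submodule (ZMod 2) (ℕ → ℕ → ZMod 2) where
  carrier := {a | a ∈ ST n ∧ rot n a = a ∧ hrefl n a = a}
  add_mem' := by
    rintro a b ⟨ha, ha', ha''⟩ ⟨hb, hb', hb''⟩
    exact ⟨add_mem ha hb, by rw [rot_add, ha', hb'], by rw [hrefl_add, ha'', hb'']⟩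
  zero_mem' := ⟨zero_mem _, by funext i j; simp [rot], by funext i j; simp [hrefl]⟩
  smul_mem' := by
    rintro c a ⟨ha, ha', ha''⟩
    exact ⟨Submodule.smul_mem _ c ha, by rw [rot_smul, ha'],
      by rw [hrefl_smul, ha'']⟩

/-- `σ₂`: the sum of the first `n` terms of a sequence over `ZMod 2`. -/
def seqSum (n : ℕ) (S : ℕ → ZMod 2) : ZMod 2 := ∑ j ∈ Finset.Icc 1 n, S j

/-- The subspace `DST₀(n)` of dihedrally symmetric Steinhaus triangles whose
first row has zero sum. -/
def DST0 (n : ℕ) : Submodule (ZMod 2) (ℕ → ℕ → ZMod 2) where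
  carrier := {a | a ∈ DST n ∧ seqSum n (a 1) = 0}
  add_mem' := by
    rintro a b ⟨ha, ha'⟩ ⟨hb, hb'⟩
    refine ⟨add_mem ha hb, ?_⟩
    have h : seqSum n ((a + b) 1) = seqSum n (a 1) + seqSum n (b 1) := by
      simp [seqSum, Finset.sum_add_distrib]
    rw [h, ha', hb', add_zero]
  zero_mem' := ⟨zero_mem _, by simp [seqSum]⟩
  smul_mem' := by
    rintro c a ⟨ha, ha'⟩
    refine ⟨Submodule.smul_mem _ c ha, ?_⟩
    have h : seqSum n ((c • a) 1) = c • seqSum n (a 1) := by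
      simp [seqSum, smul_eq_mul, Finset.mul_sum]
    rw [h, ha', smul_zero]

/-- The derived sequence `∂S`. -/
def der (S : ℕ → ZMod 2) : ℕ → ZMod 2 := fun j => S j + S (j + 1)

/-- The antiderived sequence `∫_{i,x} S`, whose `j`-th term is
`x + Σ_{k=1}^{i-1} S k + Σ_{k=1}^{j-1} S k`. -/
def antider (i : ℕ) (x : ZMod 2) (S : ℕ → ZMod 2) : ℕ → ZMod 2 :=
  fun j => x + (∑ k ∈ Finset.Ico 1 i, S k) + (∑ k ∈ Finset.Ico 1 j, S k)

/-- A sequence of length `n` is symmetric. -/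
def SymmSeq (n : ℕ) (S : ℕ → ZMod 2) : Prop :=
  ∀ j, 1 ≤ j → j ≤ n → S (n - j + 1) = S j

/-- The binomial sequence `bs(k,l)` whose `j`-th term is `C(l+j-1, k) mod 2`. -/
def bseq (k l : ℤ) : ℕ → ZMod 2 := fun j => ((ibinom (l + (j : ℤ) - 1) k : ℤ) : ZMod 2)

/-- The map `H : ST(n) → ST(n-3)` removing the first row and the two sides. -/
def Hmap (n : ℕ) (a : ℕ → ℕ → ZMod 2) : ℕ → ℕ → ZMod 2 :=
  fun i j => if InTri (n - 3) i j then a (1 + i) (2 + j) else 0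

/-- The projection `π_G` of a subspace `V` of triangles onto coordinates in `G`. -/
def proj (V : Submodule (ZMod 2) (ℕ → ℕ → ZMod 2)) (G : Set (ℕ × ℕ)) :
    V →ₗ[ZMod 2] (G → ZMod 2) where
  toFun a := fun p => (a : ℕ → ℕ → ZMod 2) p.1.1 p.1.2
  map_add' := fun _ _ => rfl
  map_smul' := fun _ _ => rfl

/-- `G` is a generating index set of the subspace `V` of `ST(n)`:
`G` consists of triangle indices and `π_G : V → (ZMod 2)^G` is an isomorphism. -/
def IsGenIndexSet (n : ℕ) (V : Submodule (ZMod 2) (ℕ → ℕ → ZMod 2))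
    (G : Set (ℕ × ℕ)) : Prop :=
  (∀ p ∈ G, InTri n p.1 p.2) ∧ Function.Bijective (proj V G)

end Steinhaus
namespace Steinhaus

/-- The Steinhaus triangle `∇S` of size `n` generated by the first row `S`,
given by `(∇S)_{i,j} = Σ_{k=0}^{i-1} C(i-1,k) S_{j-k}`. -/
def nabla (n : ℕ) (S : ℕ → ZMod 2) : ℕ → ℕ → ZMod 2 :=
  fun i j => if InTri n i j then
    ∑ k ∈ Finset.range i, ((i - 1).choose k : ZMod 2) * S (j - k) else 0

/-- The interlacing `ir(S)` of a sequence `S` of length `n-1` and its reverse: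
`ir(S)_{2j-1} = S_j` and `ir(S)_{2j} = S_{n-j}`. -/
def ir (n : ℕ) (S : ℕ → ZMod 2) : ℕ → ZMod 2 :=
  fun j => if j % 2 = 1 then S ((j + 1) / 2) else S (n - j / 2)

/-- `M` is the adjacency matrix (over `ZMod 2`) of the Steinhaus graph `G(S)`
of order `n` associated with the sequence `S` of length `n-1`. -/
def IsSteinhausAdj (n : ℕ) (S : ℕ → ZMod 2) (M : ℕ → ℕ → ZMod 2) : Prop :=
  (∀ i j, 1 ≤ i → i ≤ n → 1 ≤ j → j ≤ n → M i j = M j i) ∧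
  (∀ i, 1 ≤ i → i ≤ n → M i i = 0) ∧
  (∀ j, 2 ≤ j → j ≤ n → M 1 j = S (j - 1)) ∧
  (∀ i j, 2 ≤ i → i < j → j ≤ n → M i j = M (i - 1) (j - 1) + M (i - 1) j)

/-- Every vertex of the graph with adjacency matrix `M` (order `n`) has even degree. -/
def EvenAdj (n : ℕ) (M : ℕ → ℕ → ZMod 2) : Prop :=
  ∀ i, 1 ≤ i → i ≤ n → Even (((Finset.Icc 1 n).filter (fun j => M i j = 1)).card)

end Steinhaus
namespace Steinhaus

/-! The first row `b = ∫_{n,0} ir(S)` of `θ(G(S))` is a palindrome, because `ir(S)` is a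
palindrome of even length, so `θ(G(S))` is always fixed by `h`; and a Steinhaus triangle is fixed
by `r` iff its right side equals its first row. Two Steinhaus steps turn the interlacing of a
sequence with its reverse into that of its derived sequence, so row `2i` of `θ(G(S))` is the
interlacing of the row `(M i (i + l))_l` of `G(S)` with its reverse, and the right side of
`θ(G(S))` reads `M i (i + 1)`, `M i n + M i (i + 1)` in rows `2i`, `2i + 1`. Hence `θ(G(S))` is
dihedrally symmetric iff `e i := b (2i) + M i (i + 1)` and `f i := M i n + S (n - i)` vanish for
`0 < i < n`. Telescoping the Steinhaus rule along rows and columns of `M` expresses the degrees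
`d i` through `e 1 = d 1`, `e (i + 1) = e i + d (i + 1) + f i` and `d n = d 1 + ∑ f`, and the
vanishing of `d 2, …, d (n - 1)` forces `f i = 0` for `i ≤ n - 2`. -/

lemma sum_Ico_add_succ {R : Type*} [CommRing R] [CharP R 2] (f : ℕ → R) {a b : ℕ}
    (hab : a ≤ b) : ∑ k ∈ Ico a b, (f k + f (k + 1)) = f a + f b := by
  simpa [CharTwo.sub_eq_add, add_comm] using Finset.sum_Ico_sub f hab

lemma even_card_filter_eq_one_iff {ι : Type*} (s : Finset ι) (f : ι → ZMod 2) :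
    Even #(s.filter (f · = 1)) ↔ ∑ i ∈ s, f i = 0 := by
  have hcast : ∀ x : ZMod 2, ((if x = 1 then 1 else 0 : ℕ) : ZMod 2) = x := by decide
  rw [← ZMod.natCast_eq_zero_iff_even, Finset.card_filter, Nat.cast_sum]
  simp only [hcast]

section Triangle

variable {m : ℕ} {a a' : ℕ → ℕ → ZMod 2}

lemma ST.eq_of_firstRow (ha : a ∈ ST m) (ha' : a' ∈ ST m)
    (h : ∀ j, 1 ≤ j → j ≤ m → a 1 j = a' 1 j) : a = a' := by
  funext i
  induction i with
  | zero => funext j; rw [ha.1 0 j (by simp [InTri]), ha'.1 0 j (by simp [InTri])]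
  | succ i ih =>
    funext j
    by_cases hin : InTri m (i + 1) j
    · obtain ⟨-, hij, hjm⟩ := hin
      rcases Nat.eq_zero_or_pos i with rfl | hi
      · exact h j hij hjm
      · rw [ha.2 (i + 1) j (by omega) hij hjm, ha'.2 (i + 1) j (by omega) hij hjm,
          Nat.add_sub_cancel, ih]
    · rw [ha.1 _ _ hin, ha'.1 _ _ hin]

lemma ST.add_two (ha : a ∈ ST m) {i j : ℕ} (hi : 1 ≤ i) (hij : i ≤ j) (hj : j + 2 ≤ m) :
    a (i + 2) (j + 2) = a i j + a i (j + 2) := by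
  have h1 := ha.2 (i + 2) (j + 2) (by omega) (by omega) hj
  have h2 := ha.2 (i + 1) (j + 1) (by omega) (by omega) (by omega)
  have h3 := ha.2 (i + 1) (j + 2) (by omega) (by omega) hj
  simp only [Nat.add_sub_cancel, show ∀ k, k + 2 - 1 = k + 1 by omega] at h1 h2 h3
  grind

lemma rot_mem_ST (ha : a ∈ ST m) : rot m a ∈ ST m := by
  refine ⟨fun i j h => by simp [rot, h], fun i j hi hij hjm => ?_⟩
  have hin : InTri m i j := ⟨by omega, hij, hjm⟩
  have hin1 : InTri m (i - 1) (j - 1) := ⟨by omega, by omega, by omega⟩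
  have hin2 : InTri m (i - 1) j := ⟨by omega, by omega, hjm⟩
  simp only [rot, if_pos hin, if_pos hin1, if_pos hin2]
  have h := ha.2 (j - i + 2) (m - i + 2) (by omega) (by omega) (by omega)
  rw [show j - 1 - (i - 1) + 1 = j - i + 1 by omega, show m - (i - 1) + 1 = m - i + 2 by omega,
    show j - (i - 1) + 1 = j - i + 2 by omega]
  rw [show j - i + 2 - 1 = j - i + 1 by omega, show m - i + 2 - 1 = m - i + 1 by omega] at h
  grind

lemma hrefl_mem_ST (ha : a ∈ ST m) : hrefl m a ∈ ST m := by
  refine ⟨fun i j h => by simp [hrefl, h], fun i j hi hij hjm => ?_⟩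
  have hin : InTri m i j := ⟨by omega, hij, hjm⟩
  have hin1 : InTri m (i - 1) (j - 1) := ⟨by omega, by omega, by omega⟩
  have hin2 : InTri m (i - 1) j := ⟨by omega, by omega, hjm⟩
  simp only [hrefl, if_pos hin, if_pos hin1, if_pos hin2]
  rw [ha.2 i (m - j + i) hi (by omega) (by omega),
    show m - (j - 1) + (i - 1) = m - j + i by omega,
    show m - j + (i - 1) = m - j + i - 1 by omega, add_comm]

lemma rot_eq_self_iff (ha : a ∈ ST m) :
    rot m a = a ↔ ∀ j, 1 ≤ j → j ≤ m → a j m = a 1 j := by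
  have hfirst : ∀ j, 1 ≤ j → j ≤ m → rot m a 1 j = a j m := fun j hj1 hjm => by
    simp only [rot, if_pos (show InTri m 1 j from ⟨le_rfl, hj1, hjm⟩)]
    congr 1 <;> omega
  refine ⟨fun h j hj1 hjm => by rw [← hfirst j hj1 hjm, h], fun h => ?_⟩
  exact ST.eq_of_firstRow (rot_mem_ST ha) ha fun j hj1 hjm => by
    rw [hfirst j hj1 hjm, h j hj1 hjm]

lemma hrefl_eq_self_iff (ha : a ∈ ST m) : hrefl m a = a ↔ SymmSeq m (a 1) := by
  have hfirst : ∀ j, 1 ≤ j → j ≤ m → hrefl m a 1 j = a 1 (m - j + 1) := fun j hj1 hjm =>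
    if_pos ⟨le_rfl, hj1, hjm⟩
  refine ⟨fun h j hj1 hjm => by rw [← hfirst j hj1 hjm, h], fun h => ?_⟩
  exact ST.eq_of_firstRow (hrefl_mem_ST ha) ha fun j hj1 hjm => by
    rw [hfirst j hj1 hjm, h j hj1 hjm]

end Triangle

section Sequences

lemma antider_succ (i : ℕ) (x : ZMod 2) (T : ℕ → ZMod 2) {j : ℕ} (hj : 1 ≤ j) :
    antider i x T (j + 1) = antider i x T j + T j := by
  simp only [antider, Finset.sum_Ico_succ_top hj, add_assoc]

/-- The involution `k ↦ 2n - 1 - k` has no fixed point, so an odd-length palindrome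
has zero sum over every interval `[j, 2n - j)`. -/
lemma symmSeq_antider {n : ℕ} {T : ℕ → ZMod 2}
    (hT : ∀ k, 1 ≤ k → k ≤ 2 * n - 2 → T (2 * n - 1 - k) = T k) (i : ℕ) (x : ZMod 2) :
    SymmSeq (2 * n - 1) (antider i x T) := by
  have hhalf : ∀ j, 1 ≤ j → j ≤ n →
      antider i x T (2 * n - 1 - j + 1) = antider i x T j := by
    intro j hj1 hjn
    have hzero : ∑ k ∈ Ico j (2 * n - 1 - j + 1), T k = 0 := by
      refine Finset.sum_involution (fun k _ => 2 * n - 1 - k) (fun k hk => ?_)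
        (fun k hk _ => ?_) (fun k hk => ?_) (fun k hk => ?_) <;> simp only [Finset.mem_Ico] at hk
      · rw [hT k (by omega) (by omega), CharTwo.add_self_eq_zero]
      · omega
      · simp only [Finset.mem_Ico]; omega
      · omega
    simp only [antider, hzero, add_zero,
      ← Finset.sum_Ico_consecutive T hj1 (show j ≤ 2 * n - 1 - j + 1 by omega)]
  intro j hj1 hj2
  rcases le_or_gt j n with hjn | hjn
  · exact hhalf j hj1 hjn
  · have h := hhalf (2 * n - 1 - j + 1) (by omega) (by omega)
    rwa [show 2 * n - 1 - (2 * n - 1 - j + 1) + 1 = j by omega, eq_comm] at h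

variable {N : ℕ} {R R' : ℕ → ZMod 2}

lemma ir_two_mul (k : ℕ) : ir N R (2 * k) = R (N - k) := by
  simp [ir]

lemma ir_two_mul_add_one (k : ℕ) : ir N R (2 * k + 1) = R (k + 1) := by
  simp [ir, Nat.add_mod, show (2 * k + 1 + 1) / 2 = k + 1 by omega]

lemma ir_palindrome {k : ℕ} (hk1 : 1 ≤ k) (hk2 : k ≤ 2 * N - 2) :
    ir N R (2 * N - 1 - k) = ir N R k := by
  rcases Nat.even_or_odd' k with ⟨l, rfl | rfl⟩
  · rw [show 2 * N - 1 - 2 * l = 2 * (N - l - 1) + 1 by omega, ir_two_mul_add_one, ir_two_mul]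
    congr 1; omega
  · rw [show 2 * N - 1 - (2 * l + 1) = 2 * (N - l - 1) by omega, ir_two_mul_add_one, ir_two_mul]
    congr 1; omega

lemma ir_congr (h : ∀ l, 1 ≤ l → l < N → R l = R' l) {m : ℕ} (hm1 : 1 ≤ m)
    (hm2 : m ≤ 2 * N - 2) : ir N R m = ir N R' m := by
  rcases Nat.even_or_odd' m with ⟨l, rfl | rfl⟩
  · simp only [ir_two_mul]; exact h _ (by omega) (by omega)
  · simp only [ir_two_mul_add_one]; exact h _ (by omega) (by omega)

lemma ir_der {m : ℕ} (hm : m ≤ 2 * N) :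
    ir N (der R) m = ir (N + 1) R m + ir (N + 1) R (m + 2) := by
  rcases Nat.even_or_odd' m with ⟨l, rfl | rfl⟩
  · rw [show 2 * l + 2 = 2 * (l + 1) by ring]
    simp only [ir_two_mul, der, show N - l + 1 = N + 1 - l by omega, Nat.add_sub_add_right]
    ring
  · rw [show 2 * l + 1 + 2 = 2 * (l + 1) + 1 by ring]
    simp only [ir_two_mul_add_one, der]

lemma sum_Ico_ir (n : ℕ) (S : ℕ → ZMod 2) :
    ∑ k ∈ Ico 1 n, ir n S k = ∑ k ∈ Ico 1 n, S k := by
  refine Finset.sum_nbij' (fun k => if k % 2 = 1 then (k + 1) / 2 else n - k / 2)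
    (fun j => if 2 * j ≤ n then 2 * j - 1 else 2 * (n - j)) ?_ ?_ ?_ ?_ ?_ <;>
    intro k hk <;> simp only [Finset.mem_Ico, ir] at hk ⊢ <;> split_ifs <;> first | omega | rfl

end Sequences

section Graph

variable {n : ℕ} {S : ℕ → ZMod 2} {M : ℕ → ℕ → ZMod 2}

lemma IsSteinhausAdj.succ_succ (hM : IsSteinhausAdj n S M) {i j : ℕ} (hi : 1 ≤ i)
    (hij : i < j) (hj : j + 1 ≤ n) : M (i + 1) (j + 1) = M i j + M i (j + 1) := by
  simpa using hM.2.2.2 (i + 1) (j + 1) (by omega) (by omega) hj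

lemma IsSteinhausAdj.one_succ (hM : IsSteinhausAdj n S M) {j : ℕ} (hj1 : 1 ≤ j)
    (hj : j + 1 ≤ n) : M 1 (j + 1) = S j := by
  simpa using hM.2.2.1 (j + 1) (by omega) hj

lemma IsSteinhausAdj.sum_Icc_eq (hM : IsSteinhausAdj n S M) {i : ℕ} (hi1 : 1 ≤ i)
    (hin : i ≤ n) :
    ∑ j ∈ Icc 1 n, M i j = ∑ k ∈ Ico 1 i, M k i + ∑ k ∈ Ico i n, M i (k + 1) := by
  rw [← Finset.Ico_add_one_right_eq_Icc,
    ← Finset.sum_Ico_consecutive _ hi1 (by omega : i ≤ n + 1),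
    Finset.sum_eq_sum_Ico_succ_bot (by omega : i < n + 1), hM.2.1 i hi1 hin, zero_add,
    ← Finset.sum_Ico_add']
  refine congrArg (· + _) (Finset.sum_congr rfl fun k hk => ?_)
  simp only [Finset.mem_Ico] at hk
  exact hM.1 i k hi1 hin (by omega) (by omega)

lemma IsSteinhausAdj.sum_Ico_col (hM : IsSteinhausAdj n S M) {i : ℕ} (hi : 1 ≤ i)
    (hin : i + 1 ≤ n) : ∑ k ∈ Ico 1 i, M k i = M 1 (i + 1) + M i (i + 1) := by
  rw [← sum_Ico_add_succ (fun k => M k (i + 1)) hi]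
  refine Finset.sum_congr rfl fun k hk => ?_
  simp only [Finset.mem_Ico] at hk
  rw [hM.succ_succ (by omega) hk.2 hin]
  grind

lemma IsSteinhausAdj.sum_Ico_row (hM : IsSteinhausAdj n S M) {i : ℕ} (hi : 1 ≤ i)
    (hin : i + 1 ≤ n) :
    ∑ k ∈ Ico (i + 1) n, M (i + 1) (k + 1) = M i (i + 1) + M i n := by
  rw [← sum_Ico_add_succ (M i) hin]
  refine Finset.sum_congr rfl fun k hk => ?_
  simp only [Finset.mem_Ico] at hk
  exact hM.succ_succ hi (by omega) (by omega)

lemma IsSteinhausAdj.degree_one (hM : IsSteinhausAdj n S M) (hn : 1 ≤ n) :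
    ∑ j ∈ Icc 1 n, M 1 j = ∑ k ∈ Ico 1 n, S k := by
  rw [hM.sum_Icc_eq le_rfl hn, Finset.Ico_self, Finset.sum_empty, zero_add]
  refine Finset.sum_congr rfl fun k hk => ?_
  simp only [Finset.mem_Ico] at hk
  exact hM.one_succ hk.1 (by omega)

lemma IsSteinhausAdj.degree_succ (hM : IsSteinhausAdj n S M) {i : ℕ} (hi : 1 ≤ i)
    (hin : i + 2 ≤ n) : ∑ j ∈ Icc 1 n, M (i + 1) j = M 1 (i + 2) + M i (i + 2) + M i n := by
  rw [hM.sum_Icc_eq (by omega) (by omega), hM.sum_Ico_col (by omega) (by omega),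
    hM.sum_Ico_row hi (by omega), hM.succ_succ hi (by omega) (by omega)]
  grind

/-- `D k r := M k (n - r) + M k (k + r + 2) + M (r + 1) (k + r + 2)` obeys Pascal's rule
`D k (r + 1) = D k r + D (k + 1) r`, and `D k 0` is the degree of `k + 1`. -/
lemma IsSteinhausAdj.defect_eq_zero (hM : IsSteinhausAdj n S M)
    (hdeg : ∀ i, 2 ≤ i → i < n → ∑ j ∈ Icc 1 n, M i j = 0) (r : ℕ) :
    ∀ k, 1 ≤ k → k + r + 2 ≤ n →
      M k (n - r) + M k (k + r + 2) + M (r + 1) (k + r + 2) = 0 := by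
  induction r with
  | zero =>
    intro k hk hkn
    rw [← hdeg (k + 1) (by omega) (by omega), hM.degree_succ hk (by omega)]
    grind
  | succ r ih =>
    intro k hk hkn
    have h1 := ih k hk (by omega)
    have h2 := ih (k + 1) (by omega) (by omega)
    have p1 := hM.succ_succ (i := k) (j := n - r - 1) hk (by omega) (by omega)
    have p2 := hM.succ_succ (i := k) (j := k + r + 2) hk (by omega) (by omega)
    have p3 := hM.succ_succ (i := r + 1) (j := k + r + 2) (by omega) (by omega) (by omega)
    rw [show n - r - 1 + 1 = n - r by omega] at p1
    rw [show n - (r + 1) = n - r - 1 by omega, show k + (r + 1) + 2 = k + r + 2 + 1 by omega]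
    rw [show k + 1 + r + 2 = k + r + 2 + 1 by omega] at h2
    grind

lemma IsSteinhausAdj.lastCol_eq_of_inner_degree_eq_zero (hM : IsSteinhausAdj n S M)
    (hdeg : ∀ i, 2 ≤ i → i < n → ∑ j ∈ Icc 1 n, M i j = 0) {k : ℕ} (hk : 1 ≤ k)
    (hkn : k + 2 ≤ n) : M k n = S (n - k) := by
  -- `D 1 (k - 1) + D k 0 = M k n + S (n - k)`
  have h1 := hM.defect_eq_zero hdeg (k - 1) 1 le_rfl (by omega)
  have h2 := hM.defect_eq_zero hdeg 0 k hk (by omega)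
  rw [show n - (k - 1) = n - k + 1 by omega, hM.one_succ (by omega) (by omega),
    show 1 + (k - 1) + 2 = k + 2 by omega, Nat.sub_add_cancel hk] at h1
  simp only [Nat.sub_zero, zero_add] at h2
  grind

end Graph

section EvenGraph

variable {n : ℕ} {S : ℕ → ZMod 2} {M : ℕ → ℕ → ZMod 2}

lemma antider_ir_two (n : ℕ) (S : ℕ → ZMod 2) :
    antider n 0 (ir n S) 2 = ∑ k ∈ Ico 1 n, S k + S 1 := by
  rw [antider_succ _ _ _ le_rfl, show 1 = 2 * 0 + 1 from rfl, ir_two_mul_add_one]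
  simp [antider, sum_Ico_ir]

lemma antider_ir_two_mul_add_one (n : ℕ) (S : ℕ → ZMod 2) {i : ℕ} (hi : 1 ≤ i) :
    antider n 0 (ir n S) (2 * i + 1) = antider n 0 (ir n S) (2 * i) + S (n - i) := by
  rw [antider_succ _ _ _ (by omega), ir_two_mul]

lemma antider_ir_two_mul_add_two (n : ℕ) (S : ℕ → ZMod 2) {i : ℕ} (hi : 1 ≤ i) :
    antider n 0 (ir n S) (2 * i + 2) = antider n 0 (ir n S) (2 * i) + S (n - i) + S (i + 1) := by
  rw [antider_succ _ _ _ (by omega), antider_ir_two_mul_add_one n S hi, ir_two_mul_add_one]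

lemma IsSteinhausAdj.antider_ir_two_add (hM : IsSteinhausAdj n S M) (hn : 2 ≤ n) :
    antider n 0 (ir n S) (2 * 1) + M 1 (1 + 1) = ∑ j ∈ Icc 1 n, M 1 j := by
  rw [hM.degree_one (by omega), antider_ir_two, hM.one_succ le_rfl hn]
  grind

lemma IsSteinhausAdj.antider_ir_two_mul_succ_add (hM : IsSteinhausAdj n S M) {i : ℕ}
    (hi : 1 ≤ i) (hin : i + 2 ≤ n) :
    antider n 0 (ir n S) (2 * (i + 1)) + M (i + 1) (i + 1 + 1) = antider n 0 (ir n S) (2 * i) +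
      M i (i + 1) + ∑ j ∈ Icc 1 n, M (i + 1) j + (M i n + S (n - i)) := by
  rw [show 2 * (i + 1) = 2 * i + 2 by ring, antider_ir_two_mul_add_two n S hi,
    hM.degree_succ hi hin, hM.succ_succ hi (by omega) (by omega), hM.one_succ (by omega) hin]
  grind

lemma IsSteinhausAdj.degree_last (hM : IsSteinhausAdj n S M) (hn : 2 ≤ n) :
    ∑ j ∈ Icc 1 n, M n j = ∑ j ∈ Icc 1 n, M 1 j +
      ∑ k ∈ Ico 1 (n - 1), (M k n + S (n - k)) + (M (n - 1) n + S (n - (n - 1))) := by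
  have hrev : ∑ k ∈ Ico 1 n, S (n - k) = ∑ k ∈ Ico 1 n, S k := by
    rw [Finset.sum_Ico_reflect S 1 (by omega : n ≤ n + 1), Nat.add_sub_cancel_left,
      Nat.add_sub_cancel]
  rw [hM.sum_Icc_eq (by omega) le_rfl, Finset.Ico_self, Finset.sum_empty, add_zero,
    hM.degree_one (by omega), add_assoc, ← Finset.sum_Ico_succ_top (by omega : 1 ≤ n - 1),
    Nat.sub_add_cancel (by omega), Finset.sum_add_distrib, hrev]
  grind

lemma IsSteinhausAdj.lastCol_eq_of_degree_eq_zero (hM : IsSteinhausAdj n S M)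
    (hd : ∀ i, 1 ≤ i → i ≤ n → ∑ j ∈ Icc 1 n, M i j = 0) {k : ℕ} (hk : 1 ≤ k)
    (hkn : k < n) : M k n = S (n - k) := by
  have hf : ∀ k ∈ Ico 1 (n - 1), M k n = S (n - k) := fun k hk =>
    hM.lastCol_eq_of_inner_degree_eq_zero (fun i hi hin => hd i (by omega) hin.le)
      (Finset.mem_Ico.1 hk).1 (by grind)
  rcases Nat.lt_or_ge (k + 1) n with hkn' | hkn'
  · exact hf k (Finset.mem_Ico.2 ⟨hk, by omega⟩)
  · have hsum : ∑ i ∈ Ico 1 (n - 1), (M i n + S (n - i)) = 0 :=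
      Finset.sum_eq_zero fun i hi => by rw [hf i hi, CharTwo.add_self_eq_zero]
    have h := hM.degree_last (by omega)
    rw [hd n (by omega) le_rfl, hd 1 le_rfl (by omega), hsum] at h
    obtain rfl : k = n - 1 := by omega
    grind

lemma IsSteinhausAdj.antider_ir_two_mul_of_degree_eq_zero (hM : IsSteinhausAdj n S M)
    (hd : ∀ i, 1 ≤ i → i ≤ n → ∑ j ∈ Icc 1 n, M i j = 0) {i : ℕ} (hi : 1 ≤ i)
    (hin : i < n) : antider n 0 (ir n S) (2 * i) = M i (i + 1) := by
  induction i, hi using Nat.le_induction with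
  | base =>
    have h := hM.antider_ir_two_add hin
    rw [hd 1 le_rfl hin.le] at h
    grind
  | succ i hi ih =>
    have h := hM.antider_ir_two_mul_succ_add hi hin
    rw [ih (by omega), hd (i + 1) (by omega) hin.le,
      hM.lastCol_eq_of_degree_eq_zero hd hi (by omega)] at h
    grind

lemma IsSteinhausAdj.degree_eq_zero (hM : IsSteinhausAdj n S M)
    (h : ∀ i, 1 ≤ i → i < n →
      antider n 0 (ir n S) (2 * i) = M i (i + 1) ∧ M i n = S (n - i))
    {i : ℕ} (hi : 1 ≤ i) (hin : i ≤ n) : ∑ j ∈ Icc 1 n, M i j = 0 := by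
  have hd1 : ∑ j ∈ Icc 1 n, M 1 j = 0 := by
    rcases Nat.lt_or_ge 1 n with hn2 | hn1
    · rw [← hM.antider_ir_two_add hn2, (h 1 le_rfl hn2).1, CharTwo.add_self_eq_zero]
    · rw [hM.degree_one (by omega), show n = 1 by omega, Finset.Ico_self, Finset.sum_empty]
  obtain rfl | ⟨i, hi', rfl⟩ : i = 1 ∨ ∃ i', 1 ≤ i' ∧ i = i' + 1 := by
    rcases Nat.eq_or_lt_of_le hi with h1 | h1
    · exact .inl h1.symm
    · exact .inr ⟨i - 1, by omega, by omega⟩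
  · exact hd1
  rcases Nat.lt_or_ge (i + 1) n with hin' | hin'
  · have hs := hM.antider_ir_two_mul_succ_add hi' (by omega)
    rw [(h i hi' (by omega)).1, (h (i + 1) (by omega) hin').1, (h i hi' (by omega)).2] at hs
    grind
  · have hsum : ∑ k ∈ Ico 1 (n - 1), (M k n + S (n - k)) = 0 :=
      Finset.sum_eq_zero fun k hk => by
        rw [(h k (Finset.mem_Ico.1 hk).1 (by grind)).2, CharTwo.add_self_eq_zero]
    rw [show i + 1 = n by omega, hM.degree_last (by omega), hd1, hsum,
      (h (n - 1) (by omega) (by omega)).2]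
    grind

lemma IsSteinhausAdj.evenAdj_iff (hM : IsSteinhausAdj n S M) :
    EvenAdj n M ↔ ∀ i, 1 ≤ i → i < n →
      antider n 0 (ir n S) (2 * i) = M i (i + 1) ∧ M i n = S (n - i) := by
  simp only [EvenAdj, even_card_filter_eq_one_iff]
  exact ⟨fun hd i hi hin => ⟨hM.antider_ir_two_mul_of_degree_eq_zero hd hi hin,
    hM.lastCol_eq_of_degree_eq_zero hd hi hin⟩, fun h _ => hM.degree_eq_zero h⟩

end EvenGraph

section Theta

variable {n : ℕ} {S : ℕ → ZMod 2} {M : ℕ → ℕ → ZMod 2} {t : ℕ → ℕ → ZMod 2}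

lemma symmSeq_antider_ir (n : ℕ) (S : ℕ → ZMod 2) :
    SymmSeq (2 * n - 1) (antider n 0 (ir n S)) :=
  symmSeq_antider (fun _ => ir_palindrome) n 0

lemma theta_row_two_mul (hM : IsSteinhausAdj n S M) (ht : t ∈ ST (2 * n - 1))
    (hrow : FirstRow (2 * n - 1) t (antider n 0 (ir n S))) {i : ℕ} (hi : 1 ≤ i) (hin : i < n)
    {m : ℕ} (hm1 : 1 ≤ m) (hm2 : m ≤ 2 * (n - i)) :
    t (2 * i) (2 * i - 1 + m) = ir (n - i + 1) (fun l => M i (i + l)) m := by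
  induction i, hi using Nat.le_induction generalizing m with
  | base =>
    have h := ht.2 2 (m + 1) le_rfl (by omega) (by omega)
    rw [show 2 - 1 = 1 from rfl, Nat.add_sub_cancel, hrow m hm1 (by omega),
      hrow (m + 1) (by omega) (by omega), antider_succ _ _ _ hm1] at h
    have hS : ir n (fun l => M 1 (1 + l)) m = ir n S m :=
      ir_congr (fun l hl1 hl2 => by simp [add_comm, hM.one_succ hl1 hl2]) hm1 (by omega)
    rw [show 2 * 1 - 1 + m = m + 1 by omega, h, Nat.sub_add_cancel (by omega : 1 ≤ n), hS]
    grind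
  | succ i hi ih =>
    rw [show 2 * (i + 1) - 1 + m = 2 * i - 1 + m + 2 by omega,
      show 2 * (i + 1) = 2 * i + 2 by ring, ST.add_two ht (by omega) (by omega) (by omega),
      ih (by omega) hm1 (by omega), show 2 * i - 1 + m + 2 = 2 * i - 1 + (m + 2) by omega,
      ih (by omega) (by omega) (by omega), ← ir_der (by omega),
      show n - (i + 1) + 1 = n - i by omega]
    refine ir_congr (fun l hl1 hl2 => ?_) hm1 (by omega)
    rw [der, show i + 1 + l = i + l + 1 by omega, hM.succ_succ hi (by omega) (by omega), add_assoc]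

lemma theta_rightSide (hM : IsSteinhausAdj n S M) (ht : t ∈ ST (2 * n - 1))
    (hrow : FirstRow (2 * n - 1) t (antider n 0 (ir n S))) {i : ℕ} (hi : 1 ≤ i) (hin : i < n) :
    t (2 * i) (2 * n - 1) = M i (i + 1) ∧ t (2 * i + 1) (2 * n - 1) = M i n + M i (i + 1) := by
  have heven := theta_row_two_mul hM ht hrow hi hin (m := 2 * (n - i)) (by omega) le_rfl
  have hodd := theta_row_two_mul hM ht hrow hi hin (m := 2 * (n - i - 1) + 1) (by omega) (by omega)
  rw [ir_two_mul, show 2 * i - 1 + 2 * (n - i) = 2 * n - 1 by omega,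
    show n - i + 1 - (n - i) = 1 by omega] at heven
  rw [ir_two_mul_add_one, show 2 * i - 1 + (2 * (n - i - 1) + 1) = 2 * n - 2 by omega,
    show i + (n - i - 1 + 1) = n by omega] at hodd
  have h := ht.2 (2 * i + 1) (2 * n - 1) (by omega) (by omega) le_rfl
  rw [Nat.add_sub_cancel, show 2 * n - 1 - 1 = 2 * n - 2 by omega, hodd, heven] at h
  exact ⟨heven, h⟩

lemma theta_rot_eq_self_iff (hM : IsSteinhausAdj n S M) (ht : t ∈ ST (2 * n - 1))
    (hrow : FirstRow (2 * n - 1) t (antider n 0 (ir n S))) :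
    rot (2 * n - 1) t = t ↔ ∀ i, 1 ≤ i → i < n →
      antider n 0 (ir n S) (2 * i) = M i (i + 1) ∧ M i n = S (n - i) := by
  rw [rot_eq_self_iff ht]
  constructor
  · intro h i hi hin
    obtain ⟨heven, hodd⟩ := theta_rightSide hM ht hrow hi hin
    have h2 := h (2 * i) (by omega) (by omega)
    have h3 := h (2 * i + 1) (by omega) (by omega)
    rw [heven, hrow _ (by omega) (by omega)] at h2
    rw [hodd, hrow _ (by omega) (by omega), antider_ir_two_mul_add_one n S hi, ← h2] at h3
    exact ⟨h2.symm, by grind⟩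
  · intro h j hj1 hj2
    rw [hrow j hj1 hj2]
    rcases Nat.even_or_odd' j with ⟨i, rfl | rfl⟩
    · rw [(theta_rightSide hM ht hrow (by omega) (by omega)).1, (h i (by omega) (by omega)).1]
    · rcases Nat.eq_zero_or_pos i with rfl | hi
      · rw [hrow _ (by omega) le_rfl, ← symmSeq_antider_ir n S 1 le_rfl hj2]
        congr 1; omega
      · rw [(theta_rightSide hM ht hrow hi (by omega)).2, antider_ir_two_mul_add_one n S hi,
          (h i hi (by omega)).1, (h i hi (by omega)).2]
        grind

end Theta

theorem statement17_general (n : ℕ) (S : ℕ → ZMod 2)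
    (M : ℕ → ℕ → ZMod 2) (hM : IsSteinhausAdj n S M)
    (t : ℕ → ℕ → ZMod 2) (ht : t ∈ ST (2 * n - 1))
    (hrow : FirstRow (2 * n - 1) t (antider n 0 (ir n S))) :
    EvenAdj n M ↔ (rot (2 * n - 1) t = t ∧ hrefl (2 * n - 1) t = t) := by
  have hsymm : SymmSeq (2 * n - 1) (t 1) := fun j hj1 hj2 => by
    rw [hrow _ (by omega) (by omega), hrow j hj1 hj2]
    exact symmSeq_antider_ir n S j hj1 hj2
  rw [hM.evenAdj_iff, theta_rot_eq_self_iff hM ht hrow,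
    and_iff_left ((hrefl_eq_self_iff ht).2 hsymm)]

/-- Theorem 3. For `n ≥ 1` and a sequence `S` of length
`n-1`, the Steinhaus graph `G(S)` (with adjacency matrix `M`) is even iff the
Steinhaus triangle `θ(G(S)) = ∇(∫_{n,0} ir(S))` of size `2n-1` (denoted `t`) is
dihedrally symmetric. -/
theorem statement17 (n : ℕ) (hn : 1 ≤ n) (S : ℕ → ZMod 2)
    (M : ℕ → ℕ → ZMod 2) (hM : IsSteinhausAdj n S M)
    (t : ℕ → ℕ → ZMod 2) (ht : t ∈ ST (2 * n - 1))
    (hrow : FirstRow (2 * n - 1) t (antider n 0 (ir n S))) :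
    EvenAdj n M ↔ (rot (2 * n - 1) t = t ∧ hrefl (2 * n - 1) t = t) :=
  statement17_general n S M hM t ht hrow

end Steinhaus
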